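/- arXiv:1705.05587 — 3 statements merged into one kernel-verified Lean document; each statement's English description precedes it below -/
import Mathlib

section
/- Let P_{XY} and Q_{XY} be joint distributions on X × Y (written as P_X·P_{Y|X} and Q_X·Q_{Y|X}). If TV(P_{XY}, Q_{XY}) ≤ ε, then the probability under P_X of the set of x for which TV(P_{Y|X=x}, Q_{Y|X=x}) ≤ √ε is at least 1 − 2√ε. -/
open Finset Real
open scoped Classical BigOperators

/-- Total variation distance (half the L¹ distance). -/
noncomputable def TV {X : Type*} [Fintype X] (P Q : X → ℝ) : ℝ :=
  (∑ x, |P x - Q x|) / 2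

/-- Shannon entropy (natural log). -/
noncomputable def Hent {X : Type*} [Fintype X] (P : X → ℝ) : ℝ :=
  -∑ x, P x * Real.log (P x)

/-- `P` is a probability distribution on a finite type. -/
def IsProb {X : Type*} [Fintype X] (P : X → ℝ) : Prop :=
  (∀ x, 0 ≤ P x) ∧ ∑ x, P x = 1

/-- Pushforward of a distribution along a map. -/
noncomputable def push {X Y : Type*} [Fintype X] (f : X → Y) (P : X → ℝ) : Y → ℝ :=
  fun y => ∑ x, if f x = y then P x else 0

/-!
Weighting the conditional distance at `x` by `P_X(x)` undoes the normalisation, so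
`P_X(x) · TV(P_{Y|x}, Q_{Y|x})` is at most the joint discrepancy on the fibre over `x` plus half
the discrepancy of the marginals there. Summing over `x`, and using that marginalising does not
increase total variation, the `P_X`-average of the conditional distances is at most
`2 TV(P, Q) ≤ 2ε`. Markov's inequality at level `√ε` then bounds the `P_X`-mass of the bad set
by `2√ε`.
-/

lemma mul_sum_filter_lt_le_sum_mul {ι : Type*} (s : Finset ι) (w f : ι → ℝ)
    (hw : ∀ i ∈ s, 0 ≤ w i) (hf : ∀ i ∈ s, 0 ≤ f i) (t : ℝ) :
    t * ∑ i ∈ s with t < f i, w i ≤ ∑ i ∈ s, w i * f i :=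
  calc t * ∑ i ∈ s with t < f i, w i = ∑ i ∈ s with t < f i, w i * t := by
        rw [mul_sum]; simp only [mul_comm]
    _ ≤ ∑ i ∈ s with t < f i, w i * f i := sum_le_sum fun i hi =>
        mul_le_mul_of_nonneg_left (mem_filter.1 hi).2.le (hw i (mem_filter.1 hi).1)
    _ ≤ ∑ i ∈ s, w i * f i := sum_le_sum_of_subset_of_nonneg (filter_subset _ _)
        fun i hi _ => mul_nonneg (hw i hi) (hf i hi)

section TV

variable {X Y : Type*} [Fintype X] [Fintype Y]

lemma TV_nonneg (p q : Y → ℝ) : 0 ≤ TV p q :=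
  div_nonneg (sum_nonneg fun _ _ => abs_nonneg _) zero_le_two

lemma TV_prod_eq_sum (P Q : X × Y → ℝ) :
    TV P Q = ∑ x, TV (fun y => P (x, y)) (fun y => Q (x, y)) := by
  rw [TV, Fintype.sum_prod_type, sum_div]
  rfl

lemma TV_marginal_le (P Q : X × Y → ℝ) :
    TV (fun x => ∑ y, P (x, y)) (fun x => ∑ y, Q (x, y)) ≤ TV P Q := by
  rw [TV, TV, Fintype.sum_prod_type]
  gcongr with x
  rw [← sum_sub_distrib]
  exact abs_sum_le_sum_abs _ _

lemma sum_mul_TV_normalize_le (p q : Y → ℝ) (hq : ∀ y, 0 ≤ q y) :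
    (∑ y, p y) * TV (fun y => p y / ∑ y', p y') (fun y => q y / ∑ y', q y')
      ≤ TV p q + |∑ y, p y - ∑ y, q y| / 2 := by
  set a := ∑ y, p y
  set b := ∑ y, q y
  rcases le_or_gt a 0 with ha | ha
  · calc _ ≤ 0 := mul_nonpos_of_nonpos_of_nonneg ha (TV_nonneg _ _)
      _ ≤ _ := add_nonneg (TV_nonneg p q) (by positivity)
  have hb : 0 ≤ b := sum_nonneg fun y _ => hq y
  -- when `b = 0` every `q y` vanishes, so `q y / b * b = q y` holds in all cases
  have hq_div_mul : ∀ y, q y / b * b = q y := by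
    intro y
    rcases hb.eq_or_lt with hb0 | hb0
    · rw [← hb0, (sum_eq_zero_iff_of_nonneg fun y _ => hq y).1 hb0.symm y (mem_univ y)]
      simp
    · exact div_mul_cancel₀ _ hb0.ne'
  have pointwise : ∀ y, a * |p y / a - q y / b| ≤ |p y - q y| + q y / b * |a - b| := by
    intro y
    calc a * |p y / a - q y / b| = |a * (p y / a - q y / b)| := by rw [abs_mul, abs_of_pos ha]
      _ = |(p y - q y) + q y / b * (b - a)| := by
          congr 1
          linear_combination mul_div_cancel₀ (p y) ha.ne' - hq_div_mul y
      _ ≤ |p y - q y| + |q y / b * (b - a)| := abs_add_le _ _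
      _ = |p y - q y| + q y / b * |a - b| := by
          rw [abs_mul, abs_of_nonneg (div_nonneg (hq y) hb), abs_sub_comm b]
  have hweights : ∑ y, q y / b * |a - b| ≤ |a - b| := by
    rw [← sum_mul, ← sum_div]
    exact mul_le_of_le_one_left (abs_nonneg _) (div_self_le_one b)
  have hsum := sum_le_sum fun y (_ : y ∈ univ) => pointwise y
  rw [← mul_sum, sum_add_distrib] at hsum
  rw [TV, TV, mul_div_assoc', ← add_div]
  gcongr
  linarith

lemma sum_marginal_mul_TV_cond_le (P Q : X × Y → ℝ) (hQ : ∀ p, 0 ≤ Q p) :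
    ∑ x, (∑ y, P (x, y)) *
        TV (fun y => P (x, y) / ∑ y', P (x, y')) (fun y => Q (x, y) / ∑ y', Q (x, y'))
      ≤ 2 * TV P Q :=
  calc _ ≤ ∑ x, (TV (fun y => P (x, y)) (fun y => Q (x, y))
          + |∑ y, P (x, y) - ∑ y, Q (x, y)| / 2) :=
        sum_le_sum fun x _ => sum_mul_TV_normalize_le _ _ fun y => hQ (x, y)
    _ = TV P Q + TV (fun x => ∑ y, P (x, y)) (fun x => ∑ y, Q (x, y)) := by
        rw [sum_add_distrib, ← sum_div, ← TV_prod_eq_sum]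
        rfl
    _ ≤ 2 * TV P Q := by linarith [TV_marginal_le P Q]

end TV

theorem conditional_tv_markov_general {X Y : Type*} [Fintype X] [Fintype Y]
    (P Q : X × Y → ℝ) (hP : IsProb P) (hQ : IsProb Q) (ε : ℝ) (hε : 0 < ε)
    (h : TV P Q ≤ ε) :
    1 - 2 * Real.sqrt ε ≤
      ∑ x ∈ Finset.univ.filter (fun x : X =>
          TV (fun y => P (x, y) / ∑ y', P (x, y'))
             (fun y => Q (x, y) / ∑ y', Q (x, y')) ≤ Real.sqrt ε),
        (∑ y, P (x, y)) := by
  set d : X → ℝ := fun x =>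
    TV (fun y => P (x, y) / ∑ y', P (x, y')) (fun y => Q (x, y) / ∑ y', Q (x, y'))
  have hsqrt : 0 < √ε := sqrt_pos.2 hε
  have hmass : ∑ x, ∑ y, P (x, y) = 1 := by rw [← Fintype.sum_prod_type, hP.2]
  have hbad : √ε * ∑ x with √ε < d x, ∑ y, P (x, y) ≤ √ε * (2 * √ε) :=
    calc _ ≤ ∑ x, (∑ y, P (x, y)) * d x :=
          mul_sum_filter_lt_le_sum_mul _ _ _ (fun x _ => sum_nonneg fun y _ => hP.1 (x, y))
            (fun x _ => TV_nonneg _ _) _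
      _ ≤ 2 * TV P Q := sum_marginal_mul_TV_cond_le P Q hQ.1
      _ ≤ √ε * (2 * √ε) := by nlinarith [mul_self_sqrt hε.le]
  have hsplit :=
    sum_filter_add_sum_filter_not univ (fun x => d x ≤ √ε) fun x => ∑ y, P (x, y)
  simp only [not_le] at hsplit
  linarith [le_of_mul_le_mul_left hbad hsqrt]

/-- if the joints are ε-close in TV, then with `P_X`-probability at least
`1 - 2√ε` the conditionals are `√ε`-close in TV. -/
theorem conditional_tv_markov {X Y : Type*} [Fintype X] [Fintype Y]
    [Nonempty X] [Nonempty Y]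
    (P Q : X × Y → ℝ) (hP : IsProb P) (hQ : IsProb Q) (ε : ℝ) (hε : 0 < ε)
    (h : TV P Q ≤ ε) :
    1 - 2 * Real.sqrt ε ≤
      ∑ x ∈ Finset.univ.filter (fun x : X =>
          TV (fun y => P (x, y) / ∑ y', P (x, y'))
             (fun y => Q (x, y) / ∑ y', Q (x, y')) ≤ Real.sqrt ε),
        (∑ y, P (x, y)) :=
  conditional_tv_markov_general P Q hP hQ ε hε h
end

section
/- If TV(P_Y·P_{X|Y}, P'_Y·P'_{X|Y}) ≤ ε with ε ≤ 1/4, then there exists y with P_Y(y) > 0 such that TV(P_{X|Y=y}, P'_{X|Y=y}) ≤ √ε. -/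
open Finset Real
open scoped Classical BigOperators

/-- if the joints are ε-close in TV (ε ≤ 1/4), then there exists `y`
in the support of `P_Y` whose conditionals are `√ε`-close in TV. -/
theorem exists_good_conditional {X Y : Type*} [Fintype X] [Fintype Y]
    [Nonempty X] [Nonempty Y]
    (P P' : X × Y → ℝ) (hP : IsProb P) (hP' : IsProb P') (ε : ℝ)
    (hε0 : 0 < ε) (hε : ε ≤ 1 / 4) (h : TV P P' ≤ ε) :
    ∃ y : Y, 0 < ∑ x, P (x, y) ∧
      TV (fun x => P (x, y) / ∑ x', P (x', y))
         (fun x => P' (x, y) / ∑ x', P' (x', y)) ≤ Real.sqrt ε := by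
  classical
  by_contra hcon
  push_neg at hcon
  set pY : Y → ℝ := fun y => ∑ x, P (x, y) with hpYdef
  set qY : Y → ℝ := fun y => ∑ x, P' (x, y) with hqYdef
  have hpY0 : ∀ y, 0 ≤ pY y := fun y => Finset.sum_nonneg fun x _ => hP.1 _
  have hqY0 : ∀ y, 0 ≤ qY y := fun y => Finset.sum_nonneg fun x _ => hP'.1 _
  have hPA : ∀ y x, pY y * (P (x, y) / pY y) = P (x, y) := by
    intro y x
    rcases eq_or_lt_of_le (hpY0 y) with h0 | h0
    · have hx : P (x, y) = 0 :=
        (Finset.sum_eq_zero_iff_of_nonneg (fun x _ => hP.1 (x, y))).mp h0.symm x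
          (Finset.mem_univ x)
      simp [hx]
    · field_simp
  have hPB : ∀ y x, qY y * (P' (x, y) / qY y) = P' (x, y) := by
    intro y x
    rcases eq_or_lt_of_le (hqY0 y) with h0 | h0
    · have hx : P' (x, y) = 0 :=
        (Finset.sum_eq_zero_iff_of_nonneg (fun x _ => hP'.1 (x, y))).mp h0.symm x
          (Finset.mem_univ x)
      simp [hx]
    · field_simp
  -- key per-y inequality
  have key : ∀ y, pY y * (∑ x, |P (x, y) / pY y - P' (x, y) / qY y|)
      ≤ (∑ x, |P (x, y) - P' (x, y)|) + |pY y - qY y| := by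
    intro y
    have hBnn : ∀ x, 0 ≤ P' (x, y) / qY y := fun x => div_nonneg (hP'.1 _) (hqY0 y)
    have hBsum : ∑ x, P' (x, y) / qY y ≤ 1 := by
      rcases eq_or_lt_of_le (hqY0 y) with h0 | h0
      · rw [← Finset.sum_div, ← h0]
        simp
      · rw [← Finset.sum_div, div_le_one h0]
    calc pY y * ∑ x, |P (x, y) / pY y - P' (x, y) / qY y|
        = ∑ x, |P (x, y) - pY y * (P' (x, y) / qY y)| := by
          rw [Finset.mul_sum]
          refine Finset.sum_congr rfl fun x _ => ?_
          rw [show pY y * |P (x, y) / pY y - P' (x, y) / qY y|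
              = |pY y * (P (x, y) / pY y - P' (x, y) / qY y)| by
                rw [abs_mul, abs_of_nonneg (hpY0 y)]]
          rw [mul_sub, hPA y x]
      _ ≤ ∑ x, (|P (x, y) - P' (x, y)| + |pY y - qY y| * (P' (x, y) / qY y)) := by
          refine Finset.sum_le_sum fun x _ => ?_
          have h1 : P (x, y) - pY y * (P' (x, y) / qY y)
              = (P (x, y) - P' (x, y)) + (qY y - pY y) * (P' (x, y) / qY y) := by
            linear_combination - hPB y x
          rw [h1]
          refine (abs_add_le _ _).trans ?_
          rw [abs_mul, abs_of_nonneg (hBnn x), abs_sub_comm (qY y) (pY y)]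
      _ = (∑ x, |P (x, y) - P' (x, y)|) + |pY y - qY y| * ∑ x, P' (x, y) / qY y := by
          rw [Finset.sum_add_distrib, Finset.mul_sum]
      _ ≤ (∑ x, |P (x, y) - P' (x, y)|) + |pY y - qY y| * 1 := by
          exact add_le_add_right (mul_le_mul_of_nonneg_left hBsum (abs_nonneg _)) _
      _ = (∑ x, |P (x, y) - P' (x, y)|) + |pY y - qY y| := by ring
  -- total L1 distance
  set D : ℝ := ∑ y, ∑ x, |P (x, y) - P' (x, y)| with hDdef
  have hD : D = ∑ z : X × Y, |P z - P' z| := by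
    rw [Fintype.sum_prod_type_right]
  have hD2 : D ≤ 2 * ε := by
    have : (∑ z : X × Y, |P z - P' z|) / 2 ≤ ε := h
    rw [hD]; linarith
  have hmarg : ∑ y, |pY y - qY y| ≤ D := by
    refine Finset.sum_le_sum fun y _ => ?_
    have : pY y - qY y = ∑ x, (P (x, y) - P' (x, y)) := by
      rw [Finset.sum_sub_distrib]
    rw [this]
    exact Finset.abs_sum_le_sum_abs _ _
  have hup : ∑ y, pY y * (∑ x, |P (x, y) / pY y - P' (x, y) / qY y|) ≤ 4 * ε := by
    calc ∑ y, pY y * (∑ x, |P (x, y) / pY y - P' (x, y) / qY y|)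
        ≤ ∑ y, ((∑ x, |P (x, y) - P' (x, y)|) + |pY y - qY y|) :=
          Finset.sum_le_sum fun y _ => key y
      _ = D + ∑ y, |pY y - qY y| := by rw [Finset.sum_add_distrib]
      _ ≤ D + D := by linarith
      _ ≤ 4 * ε := by linarith
  -- lower bound
  have hone : ∑ y, pY y = 1 := by
    rw [hpYdef, ← Fintype.sum_prod_type_right]
    exact hP.2
  have hex : ∃ y, 0 < pY y := by
    by_contra h'
    push_neg at h'
    have hz : ∑ y, pY y = 0 :=
      Finset.sum_eq_zero fun y _ => le_antisymm (h' y) (hpY0 y)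
    rw [hz] at hone; norm_num at hone
  obtain ⟨y0, hy0⟩ := hex
  have hTVeq : ∀ y, TV (fun x => P (x, y) / ∑ x', P (x', y))
      (fun x => P' (x, y) / ∑ x', P' (x', y))
      = (∑ x, |P (x, y) / pY y - P' (x, y) / qY y|) / 2 := fun y => rfl
  have hlow : Real.sqrt ε < ∑ y, pY y * (∑ x, |P (x, y) / pY y - P' (x, y) / qY y|) / 2 := by
    have : ∑ y, pY y * Real.sqrt ε < ∑ y, pY y * (∑ x, |P (x, y) / pY y - P' (x, y) / qY y|) / 2 := by
      refine Finset.sum_lt_sum (fun y _ => ?_) ⟨y0, Finset.mem_univ y0, ?_⟩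
      · rcases eq_or_lt_of_le (hpY0 y) with h0 | h0
        · rw [← h0]; simp
        · have := hcon y h0
          rw [hTVeq y] at this
          rw [mul_div_assoc]
          exact mul_le_mul_of_nonneg_left this.le (hpY0 y)
      · have := hcon y0 hy0
        rw [hTVeq y0] at this
        rw [mul_div_assoc]
        exact mul_lt_mul_of_pos_left this hy0
    calc Real.sqrt ε = (∑ y, pY y) * Real.sqrt ε := by rw [hone, one_mul]
      _ = ∑ y, pY y * Real.sqrt ε := by rw [Finset.sum_mul]
      _ < _ := this
  have hup' : ∑ y, pY y * (∑ x, |P (x, y) / pY y - P' (x, y) / qY y|) / 2 ≤ 2 * ε := by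
    have : ∑ y, pY y * (∑ x, |P (x, y) / pY y - P' (x, y) / qY y|) / 2
        = (∑ y, pY y * (∑ x, |P (x, y) / pY y - P' (x, y) / qY y|)) / 2 := by
      rw [Finset.sum_div]
    rw [this]; linarith
  nlinarith [Real.sq_sqrt hε0.le, Real.sqrt_nonneg ε, Real.sqrt_pos.mpr hε0]
end

section
/- Bounded mutual information with a uniform independent time index under near-i.i.d. distribution: if TV(P_{(S,X,Ŝ,Y)^n}, P̄^{⊗n}) ≤ ε and T is uniform on {1,…,n} independent of the sequence, then I(S_T, X_T, Ŝ_T, Y_T; T) ≤ f(ε) for a function f with f(ε) → 0 as ε → 0 (explicitly f(ε) = 2√ε(2H(P̄)+δ) + 2δ + δ with δ = ε log(|A|/ε), where A is the single-letter alphabet). -/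
open Finset Real
open scoped Classical BigOperators

/-
Each marginal `P_t` is within total variation `ε` of `P̄` (data processing applied to the
coordinate map), hence so is their average. A one-sided Fannes inequality
`H(q) - H(p) ≤ ε + ε log (|A| / ε)` then bounds `H(avg_t P_t)` from above and every `H(P_t)` from
below by `H(P̄)` up to `ε + δ`, so the mutual information is at most `2ε + 2δ`. This is below the
stated bound as soon as `|A| ≥ 2`, and for `|A| = 1` all entropies vanish.
-/

open Real

lemma negMulLog_add_le {x y : ℝ} (hx : 0 ≤ x) (hy : 0 ≤ y) :
    negMulLog (x + y) ≤ negMulLog x + negMulLog y := by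
  rcases hx.eq_or_lt with rfl | hx
  · simp
  rcases hy.eq_or_lt with rfl | hy
  · simp
  have hlx := log_le_log hx (le_add_of_nonneg_right hy.le)
  have hly := log_le_log hy (le_add_of_nonneg_left hx.le)
  simp only [negMulLog]
  nlinarith

-- `x ↦ negMulLog x + x` is monotone on `[0, 1]`, its derivative being `-log x`.
lemma negMulLog_sub_negMulLog_le {p q : ℝ} (hq : 0 ≤ q) (hqp : q ≤ p) (hp : p ≤ 1) :
    negMulLog q - negMulLog p ≤ p - q := by
  have hlogp : log p ≤ 0 := log_nonpos (hq.trans hqp) hp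
  rcases hq.eq_or_lt with rfl | hq
  · simp only [negMulLog]
    nlinarith [hq.trans hqp]
  have hratio : q * (log p - log q) ≤ p - q := by
    rw [← log_div (hq.trans_le hqp).ne' hq.ne']
    have := log_le_sub_one_of_pos (div_pos (hq.trans_le hqp) hq)
    calc q * log (p / q) ≤ q * (p / q - 1) := by gcongr
      _ = p - q := by field_simp
  simp only [negMulLog]
  nlinarith [mul_nonpos_of_nonneg_of_nonpos (sub_nonneg.2 hqp) hlogp]

lemma negMulLog_le_inv_sub_add_mul_log {c s : ℝ} (hc : 0 < c) (hs : 0 ≤ s) :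
    negMulLog s ≤ c⁻¹ - s + s * log c := by
  have h := negMulLog_le_one_sub_self (mul_nonneg hc.le hs)
  rw [negMulLog_mul, negMulLog] at h
  refine le_of_mul_le_mul_left ?_ hc
  rw [mul_add, mul_sub, mul_inv_cancel₀ hc.ne']
  linarith

section Entropy

variable {X : Type*} [Fintype X] {p q : X → ℝ}

lemma IsProb.nonempty (hp : IsProb p) : Nonempty X := by
  by_contra h
  rw [not_nonempty_iff] at h
  simpa using hp.2

lemma IsProb.le_one (hp : IsProb p) (x : X) : p x ≤ 1 :=
  hp.2 ▸ single_le_sum (fun y _ => hp.1 y) (mem_univ x)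

lemma Hent_eq_sum_negMulLog (p : X → ℝ) : Hent p = ∑ x, negMulLog (p x) := by
  simp [Hent, negMulLog]

lemma Hent_nonneg (hp : IsProb p) : 0 ≤ Hent p := by
  rw [Hent_eq_sum_negMulLog]
  exact sum_nonneg fun x _ => negMulLog_nonneg (hp.1 x) (hp.le_one x)

lemma Hent_eq_zero_of_subsingleton [Subsingleton X] (hp : IsProb p) : Hent p = 0 := by
  obtain ⟨x⟩ := hp.nonempty
  have hx : p x = 1 := by rw [← hp.2, Fintype.sum_subsingleton _ x]
  rw [Hent_eq_sum_negMulLog, Fintype.sum_subsingleton _ x, hx, negMulLog_one]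

lemma TV_comm (p q : X → ℝ) : TV p q = TV q p := by
  simp [TV, abs_sub_comm]

lemma TV_eq_sum_max_sub (h : ∑ x, p x = ∑ x, q x) : TV p q = ∑ x, max (q x - p x) 0 := by
  have habs : ∀ x, |p x - q x| = max (p x - q x) 0 + max (q x - p x) 0 := fun x => by
    rw [← neg_sub (p x), max_zero_add_max_neg_zero_eq_abs_self]
  have hdiff : ∀ x, max (p x - q x) 0 - max (q x - p x) 0 = p x - q x := fun x => by
    rw [← neg_sub (p x), max_zero_sub_max_neg_zero_eq_self]
  have hbal : ∑ x, max (p x - q x) 0 = ∑ x, max (q x - p x) 0 := by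
    rw [← sub_eq_zero, ← sum_sub_distrib, sum_congr rfl fun x _ => hdiff x, sum_sub_distrib, h,
      sub_self]
  rw [TV, sum_congr rfl fun x _ => habs x, sum_add_distrib, hbal]
  ring

lemma Hent_sub_Hent_le_of_TV_le (hp : IsProb p) (hq : IsProb q) {ε : ℝ} (hε0 : 0 < ε)
    (hε1 : ε ≤ 1) (hTV : TV p q ≤ ε) :
    Hent q - Hent p ≤ ε + ε * log (Fintype.card X / ε) := by
  have := hp.nonempty
  have hT_pos : TV p q = ∑ x, max (p x - q x) 0 := by
    rw [TV_comm]; exact TV_eq_sum_max_sub (hq.2.trans hp.2.symm)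
  have hT_neg : TV p q = ∑ x, max (q x - p x) 0 := TV_eq_sum_max_sub (hp.2.trans hq.2.symm)
  have hN : (1 : ℝ) ≤ Fintype.card X := by exact_mod_cast Fintype.card_pos
  set N : ℝ := (Fintype.card X : ℝ)
  set L := log (N / ε)
  set T := TV p q
  have hL : 0 ≤ L := log_nonneg ((one_le_div hε0).2 (hε1.trans hN))
  -- Mass moving down costs at most its amount; mass moving up costs at most its own entropy.
  have hpoint : ∀ x, negMulLog (q x) - negMulLog (p x)
      ≤ max (p x - q x) 0 + negMulLog (max (q x - p x) 0) := fun x => by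
    rcases le_total (p x) (q x) with hpq | hqp
    · rw [max_eq_right (sub_nonpos.2 hpq), max_eq_left (sub_nonneg.2 hpq)]
      have := negMulLog_add_le (hp.1 x) (sub_nonneg.2 hpq)
      rw [add_sub_cancel] at this
      linarith
    · rw [max_eq_left (sub_nonneg.2 hqp), max_eq_right (sub_nonpos.2 hqp), negMulLog_zero]
      linarith [negMulLog_sub_negMulLog_le (hq.1 x) hqp (hp.le_one x)]
  calc Hent q - Hent p = ∑ x, (negMulLog (q x) - negMulLog (p x)) := by
        rw [Hent_eq_sum_negMulLog, Hent_eq_sum_negMulLog, sum_sub_distrib]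
    _ ≤ ∑ x, (max (p x - q x) 0
          + ((N / ε)⁻¹ - max (q x - p x) 0 + max (q x - p x) 0 * L)) := by
        gcongr with x
        refine (hpoint x).trans ?_
        gcongr
        exact negMulLog_le_inv_sub_add_mul_log (c := N / ε) (by positivity) (le_max_right _ _)
    _ = T + (ε - T + T * L) := by
        rw [sum_add_distrib, sum_add_distrib, sum_sub_distrib, ← sum_mul, ← hT_pos, ← hT_neg,
          sum_const, card_univ, nsmul_eq_mul, inv_div, mul_div_cancel₀ _ (by positivity)]
    _ ≤ ε + ε * L := by nlinarith

end Entropy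

section Push

variable {X Y : Type*} [Fintype X]

lemma push_apply (f : X → Y) (P : X → ℝ) (y : Y) : push f P y = ∑ x with f x = y, P x :=
  (sum_filter _ _).symm

lemma isProb_push [Fintype Y] (f : X → Y) {P : X → ℝ} (hP : IsProb P) : IsProb (push f P) := by
  refine ⟨fun y => ?_, ?_⟩
  · rw [push_apply]
    exact sum_nonneg fun x _ => hP.1 x
  · simp_rw [push_apply]
    exact (sum_fiberwise univ f P).trans hP.2

lemma TV_push_le [Fintype Y] (f : X → Y) (P Q : X → ℝ) :
    TV (push f P) (push f Q) ≤ TV P Q := by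
  unfold TV
  gcongr
  calc ∑ y, |push f P y - push f Q y| = ∑ y, |∑ x with f x = y, (P x - Q x)| := by
        simp_rw [push_apply, sum_sub_distrib]
    _ ≤ ∑ y, ∑ x with f x = y, |P x - Q x| := sum_le_sum fun y _ => abs_sum_le_sum_abs _ _
    _ = ∑ x, |P x - Q x| := sum_fiberwise _ _ _

end Push

lemma push_eval_prod {ι A : Type*} [Fintype ι] [DecidableEq ι] [Fintype A] (p : ι → A → ℝ)
    (hp : ∀ i, ∑ a, p i a = 1) (t : ι) :
    push (fun v : ι → A => v t) (fun v => ∏ i, p i (v i)) = p t := by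
  funext a
  have hfiber : ({v | v t = a} : Finset (ι → A))
      = Fintype.piFinset fun i => if i = t then {a} else univ := by
    ext v
    simp only [mem_filter, mem_univ, true_and, Fintype.mem_piFinset]
    refine ⟨fun h i => ?_, fun h => by simpa using h t⟩
    split_ifs with hi
    · simp [hi, h]
    · exact mem_univ _
  rw [push_apply, hfiber, ← prod_univ_sum]
  calc ∏ i, ∑ x ∈ (if i = t then {a} else univ), p i x = ∏ i, if i = t then p t a else 1 := by
        refine prod_congr rfl fun i _ => ?_
        split_ifs with hi
        · simp [hi]
        · exact hp i
    _ = p t a := by simp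

section Average

variable {ι X : Type*} [Fintype ι] [Nonempty ι] [Fintype X]

lemma le_inv_card_mul_sum {f : ι → ℝ} {c : ℝ} (h : ∀ i, c ≤ f i) :
    c ≤ (Fintype.card ι : ℝ)⁻¹ * ∑ i, f i := by
  have hcard : (0 : ℝ) < Fintype.card ι := by exact_mod_cast Fintype.card_pos
  rw [le_inv_mul_iff₀ hcard]
  simpa using card_nsmul_le_sum univ f c fun i _ => h i

lemma isProb_average {p : ι → X → ℝ} (hp : ∀ i, IsProb (p i)) :
    IsProb fun x => (Fintype.card ι : ℝ)⁻¹ * ∑ i, p i x := by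
  refine ⟨fun x => mul_nonneg (by positivity) (sum_nonneg fun i _ => (hp i).1 x), ?_⟩
  rw [← mul_sum, sum_comm]
  simp [fun i => (hp i).2]

lemma TV_average_le {p : ι → X → ℝ} {q : X → ℝ} {ε : ℝ} (hp : ∀ i, TV (p i) q ≤ ε) :
    TV (fun x => (Fintype.card ι : ℝ)⁻¹ * ∑ i, p i x) q ≤ ε := by
  have hN : (0 : ℝ) < Fintype.card ι := by exact_mod_cast Fintype.card_pos
  set N : ℝ := (Fintype.card ι : ℝ) with hN_def
  calc TV (fun x => N⁻¹ * ∑ i, p i x) q = (∑ x, |N⁻¹ * ∑ i, (p i x - q x)|) / 2 := by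
        simp only [TV, sum_sub_distrib, sum_const, card_univ, nsmul_eq_mul, mul_sub, ← hN_def,
          inv_mul_cancel_left₀ hN.ne']
    _ ≤ (∑ x, N⁻¹ * ∑ i, |p i x - q x|) / 2 := by
        gcongr with x
        rw [abs_mul, abs_of_pos (inv_pos.2 hN)]
        gcongr
        exact abs_sum_le_sum_abs _ _
    _ = N⁻¹ * ∑ i, TV (p i) q := by
        simp only [TV, ← mul_sum, ← sum_div, sum_comm (γ := X)]
        ring
    _ ≤ N⁻¹ * ∑ _i : ι, ε := by gcongr with i; exact hp i
    _ = ε := by simp [N, hN.ne']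

end Average

-- `log (N / ε) ≥ log 2 - 2 log √ε ≥ log 2 + 2 (1 - √ε)`, and `log 2 > 0.69` closes the gap.
lemma two_mul_le_mul_log_div_mul {N ε : ℝ} (hN : 2 ≤ N) (hε0 : 0 < ε) (hε1 : ε ≤ 1) :
    2 * ε ≤ ε * log (N / ε) * (1 + 2 * √ε) := by
  set u := √ε
  have hu0 : 0 < u := sqrt_pos.2 hε0
  have hu1 : u ≤ 1 := sqrt_le_one.2 hε1
  have hε : ε = u ^ 2 := (sq_sqrt hε0.le).symm
  have hlog : log 2 + 2 * (1 - u) ≤ log (N / ε) := by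
    rw [log_div (by positivity) hε0.ne', hε, log_pow]
    have := log_le_log (by norm_num) hN
    have := log_le_sub_one_of_pos hu0
    push_cast
    linarith
  have hlog2 := log_two_gt_d9
  have key : 2 ≤ log (N / ε) * (1 + 2 * u) := by
    nlinarith [mul_nonneg hu0.le (sub_nonneg.2 hu1)]
  nlinarith

theorem time_index_mutual_information_bound_general {A : Type*} [Fintype A]
    {n : ℕ} (hn : 0 < n) (P : (Fin n → A) → ℝ) (Pbar : A → ℝ)
    (hP : IsProb P) (hPbar : IsProb Pbar) (ε : ℝ) (hε0 : 0 < ε) (hε : ε ≤ 1 / 2)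
    (h : TV P (fun v => ∏ i, Pbar (v i)) ≤ ε) :
    Hent (fun a : A => (n : ℝ)⁻¹ * ∑ t : Fin n, push (fun v : Fin n → A => v t) P a)
        - (n : ℝ)⁻¹ * ∑ t : Fin n, Hent (push (fun v : Fin n → A => v t) P)
      ≤ 2 * Real.sqrt ε * (2 * Hent Pbar + ε * Real.log ((Fintype.card A : ℝ) / ε))
          + 2 * (ε * Real.log ((Fintype.card A : ℝ) / ε))
          + ε * Real.log ((Fintype.card A : ℝ) / ε) := by
  have := hPbar.nonempty
  have : Nonempty (Fin n) := ⟨⟨0, hn⟩⟩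
  have hε1 : ε ≤ 1 := by linarith
  have hN : (1 : ℝ) ≤ Fintype.card A := by exact_mod_cast Fintype.card_pos
  set δ := ε * log ((Fintype.card A : ℝ) / ε)
  have hδ : 0 ≤ δ := mul_nonneg hε0.le (log_nonneg ((one_le_div hε0).2 (hε1.trans hN)))
  have hHbar := Hent_nonneg hPbar
  have hPt : ∀ t : Fin n, IsProb (push (fun v : Fin n → A => v t) P) := fun t => isProb_push _ hP
  have hQ := isProb_average hPt
  simp only [Fintype.card_fin] at hQ
  rcases lt_or_ge (Fintype.card A : ℝ) 2 with hN2 | hN2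
  · have : Subsingleton A := Fintype.card_le_one_iff_subsingleton.mp (by
      have : Fintype.card A < 2 := by exact_mod_cast hN2
      omega)
    simp only [Hent_eq_zero_of_subsingleton hQ, Hent_eq_zero_of_subsingleton (hPt _),
      sum_const_zero, mul_zero, sub_self]
    positivity
  have hTVt : ∀ t : Fin n, TV (push (fun v : Fin n → A => v t) P) Pbar ≤ ε := fun t => by
    have hmarg : push (fun v : Fin n → A => v t) (fun v => ∏ i, Pbar (v i)) = Pbar :=
      push_eval_prod (fun _ => Pbar) (fun _ => hPbar.2) t
    rw [← hmarg]
    exact (TV_push_le _ P _).trans h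
  have hQ_up : Hent _ - Hent Pbar ≤ ε + δ := Hent_sub_Hent_le_of_TV_le hPbar hQ hε0 hε1 (by
    rw [TV_comm]
    simpa only [Fintype.card_fin] using TV_average_le hTVt)
  have hPt_low : Hent Pbar - (ε + δ) ≤ (n : ℝ)⁻¹ * ∑ t : Fin n, Hent (push (fun v => v t) P) := by
    simpa only [Fintype.card_fin] using le_inv_card_mul_sum fun t =>
      sub_le_comm.1 (Hent_sub_Hent_le_of_TV_le (hPt t) hPbar hε0 hε1 (hTVt t))
  have hgap := two_mul_le_mul_log_div_mul hN2 hε0 hε1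
  nlinarith [mul_nonneg (sqrt_nonneg ε) hHbar, mul_nonneg (sqrt_nonneg ε) hδ]

/-- for a near-i.i.d. sequence and `T` uniform and independent,
`I(A_T; T) = H((1/n)∑_t P_t) − (1/n)∑_t H(P_t) ≤ f(ε)`. -/
theorem time_index_mutual_information_bound {A : Type*} [Fintype A] [Nonempty A]
    {n : ℕ} (hn : 0 < n) (P : (Fin n → A) → ℝ) (Pbar : A → ℝ)
    (hP : IsProb P) (hPbar : IsProb Pbar) (ε : ℝ) (hε0 : 0 < ε) (hε : ε ≤ 1 / 2)
    (h : TV P (fun v => ∏ i, Pbar (v i)) ≤ ε) :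
    Hent (fun a : A => (n : ℝ)⁻¹ * ∑ t : Fin n, push (fun v : Fin n → A => v t) P a)
        - (n : ℝ)⁻¹ * ∑ t : Fin n, Hent (push (fun v : Fin n → A => v t) P)
      ≤ 2 * Real.sqrt ε * (2 * Hent Pbar + ε * Real.log ((Fintype.card A : ℝ) / ε))
          + 2 * (ε * Real.log ((Fintype.card A : ℝ) / ε))
          + ε * Real.log ((Fintype.card A : ℝ) / ε) :=
  time_index_mutual_information_bound_general hn P Pbar hP hPbar ε hε0 hε h
end
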